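/- Define the one-step EKF0 posterior covariance with zero initial covariance and zero measurement noise by P(δ) = (I₂ − K(δ)·H₁)·Q(δ), where K(δ) = Q(δ)·H₁ᵀ·(H₁·Q(δ)·H₁ᵀ)⁻¹. Then there exists C > 0, depending only on θ and η, such that for all 0 < δ ≤ 1: |P(δ)₀,₀ − η²·δ³/12| ≤ C·δ⁵. -/

import Mathlib

open Matrix MeasureTheory Real

noncomputable section

/-- Drift matrix `F = [[0, 1], [0, −θ]]` of the integrated Ornstein–Uhlenbeck prior. -/
def Fmat (θ : ℝ) : Matrix (Fin 2) (Fin 2) ℝ := !![0, 1; 0, -θ]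

/-- Diffusion column vector `L = (0, η)ᵀ`. -/
def Lmat (η : ℝ) : Matrix (Fin 2) (Fin 1) ℝ := !![0; η]

/-- Noise covariance `Q(δ) = ∫₀^δ exp(sF)·L·Lᵀ·exp(sFᵀ) ds` (entrywise Bochner integral). -/
def Qmat (θ η δ : ℝ) : Matrix (Fin 2) (Fin 2) ℝ :=
  Matrix.of fun i j => ∫ s in (0:ℝ)..δ,
    (NormedSpace.exp (s • Fmat θ) * (Lmat η * (Lmat η)ᵀ) *
      NormedSpace.exp (s • (Fmat θ)ᵀ)) i j


/-- Observation row vector `H₁ = (0, 1)`. -/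
def H1row : Matrix (Fin 1) (Fin 2) ℝ := !![0, 1]

/-- Kalman gain `K(δ) = Q(δ)·H₁ᵀ·(H₁·Q(δ)·H₁ᵀ)⁻¹` with zero measurement noise. -/
def Kgain (θ η δ : ℝ) : Matrix (Fin 2) (Fin 1) ℝ :=
  Qmat θ η δ * H1rowᵀ * (H1row * Qmat θ η δ * H1rowᵀ)⁻¹

/-- One-step EKF0 posterior covariance `P(δ) = (I₂ − K(δ)·H₁)·Q(δ)` with zero initial
covariance and zero measurement noise. -/
def Pmat (θ η δ : ℝ) : Matrix (Fin 2) (Fin 2) ℝ :=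
  ((1 : Matrix (Fin 2) (Fin 2) ℝ) - Kgain θ η δ * H1row) * Qmat θ η δ

/-! With `E(s) = e^{-θs}` and `G(s) = ∫₀^s E`, one has `exp(sF) = [[1, G], [0, E]]`,
so `P(δ)₀₀ = Q₀₀ - Q₀₁² / Q₁₁` with `Q = η² ∫₀^δ (G, E)ᵀ (G, E)`. The identity
`θ G = 1 - E` gives `Q₀₁ = η² G² / 2` and `Q₁₁ = η² G (1 + E) / 2`, and then
`P(δ)₀₀ = η² ∫₀^δ h²` for `h = G / (1 + E) = tanh (θ s / 2) / θ`. As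
`h' = (1 - θ² h²) / 2`, comparing derivatives gives `s/2 - θ² s³/24 ≤ h ≤ s/2`, hence
`δ³/12 - θ² δ⁵/120 ≤ P(δ)₀₀ / η² ≤ δ³/12`. -/

def decayIntegral (θ s : ℝ) : ℝ := ∫ u in (0:ℝ)..s, rexp (-(θ * u))

lemma hasDerivAt_exp_neg_mul (θ s : ℝ) :
    HasDerivAt (fun s => rexp (-(θ * s))) (-θ * rexp (-(θ * s))) s := by
  convert (((hasDerivAt_id' s).const_mul θ).fun_neg).exp using 1
  ring

lemma hasDerivAt_decayIntegral (θ s : ℝ) :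
    HasDerivAt (decayIntegral θ) (rexp (-(θ * s))) s :=
  (Continuous.integral_hasStrictDerivAt (by fun_prop) 0 s).hasDerivAt

lemma continuous_decayIntegral (θ : ℝ) : Continuous (decayIntegral θ) :=
  continuous_iff_continuousAt.2 fun s => (hasDerivAt_decayIntegral θ s).continuousAt

lemma mul_decayIntegral (θ s : ℝ) : θ * decayIntegral θ s = 1 - rexp (-(θ * s)) := by
  rw [decayIntegral, ← intervalIntegral.integral_const_mul,
    intervalIntegral.integral_eq_sub_of_hasDerivAt (f := fun u => -rexp (-(θ * u)))
      (fun u _ => by simpa using (hasDerivAt_exp_neg_mul θ u).fun_neg)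
      ((by fun_prop : Continuous _).intervalIntegrable _ _)]
  simp only [mul_zero, neg_zero, exp_zero, sub_neg_eq_add]
  ring

lemma decayIntegral_zero_left (s : ℝ) : decayIntegral 0 s = s := by
  simp [decayIntegral]

lemma exp_smul_Fmat (θ s : ℝ) :
    NormedSpace.exp (s • Fmat θ) = !![1, decayIntegral θ s; 0, rexp (-(θ * s))] := by
  rcases eq_or_ne θ 0 with rfl | hθ
  · have hsq : (s • Fmat 0) ^ 2 = 0 := by
      ext i j
      fin_cases i <;> fin_cases j <;> simp [Fmat, sq, Matrix.mul_apply]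
    have hvanish :
        ∀ n ∉ Finset.range 2, (n.factorial⁻¹ : ℝ) • (s • Fmat 0) ^ n = 0 := by
      intro n hn
      obtain ⟨k, rfl⟩ : ∃ k, n = 2 + k := Nat.exists_eq_add_of_le (by simp at hn; omega)
      rw [pow_add, hsq, zero_mul, smul_zero]
    rw [NormedSpace.exp_eq_tsum ℝ]
    dsimp only
    rw [tsum_eq_sum hvanish, decayIntegral_zero_left]
    ext i j
    fin_cases i <;> fin_cases j <;> simp [Finset.sum_range_succ, Fmat]
  · -- `F` has eigenvalues `0` and `-θ`, with eigenvectors the columns of `U`.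
    set U : Matrix (Fin 2) (Fin 2) ℝ := !![1, 1; 0, -θ]
    have hUinv : U⁻¹ = !![1, 1 / θ; 0, -(1 / θ)] := by
      refine Matrix.inv_eq_right_inv ?_
      ext i j
      fin_cases i <;> fin_cases j <;> simp [U, hθ]
    have hU : IsUnit U := by
      rw [Matrix.isUnit_iff_isUnit_det, isUnit_iff_ne_zero]
      simpa [U, Matrix.det_fin_two_of] using hθ
    have hdiag : s • Fmat θ = U * Matrix.diagonal ![0, -(θ * s)] * U⁻¹ := by
      rw [hUinv, Matrix.diagonal_fin_two]
      ext i j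
      fin_cases i <;> fin_cases j <;> simp [U, Fmat] <;> field_simp
    have hexp : NormedSpace.exp (![0, -(θ * s)] : Fin 2 → ℝ) = ![1, rexp (-(θ * s))] := by
      ext i
      fin_cases i <;> simp [← Real.exp_eq_exp_ℝ]
    have hG : decayIntegral θ s = (1 - rexp (-(θ * s))) / θ := by
      rw [← mul_decayIntegral, mul_div_cancel_left₀ _ hθ]
    rw [hdiag, Matrix.exp_conj _ _ hU, Matrix.exp_diagonal, hexp, Matrix.diagonal_fin_two, hUinv,
      hG]
    ext i j
    fin_cases i <;> fin_cases j <;> simp [U] <;> field_simp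
    ring

lemma Qmat_integrand (θ η s : ℝ) :
    NormedSpace.exp (s • Fmat θ) * (Lmat η * (Lmat η)ᵀ) *
        NormedSpace.exp (s • (Fmat θ)ᵀ) =
      η ^ 2 • !![decayIntegral θ s ^ 2, decayIntegral θ s * rexp (-(θ * s));
        decayIntegral θ s * rexp (-(θ * s)), rexp (-(θ * s)) ^ 2] := by
  rw [← Matrix.transpose_smul, Matrix.exp_transpose, exp_smul_Fmat]
  ext i j
  fin_cases i <;> fin_cases j <;>
    simp [Lmat, Matrix.mul_apply, Matrix.vecMul, dotProduct] <;> ring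

lemma Qmat_zero_zero (θ η δ : ℝ) :
    Qmat θ η δ 0 0 = η ^ 2 * ∫ s in (0:ℝ)..δ, decayIntegral θ s ^ 2 := by
  simp [Qmat, Qmat_integrand]

lemma Qmat_zero_one (θ η δ : ℝ) :
    Qmat θ η δ 0 1 = η ^ 2 * ∫ s in (0:ℝ)..δ, decayIntegral θ s * rexp (-(θ * s)) := by
  simp [Qmat, Qmat_integrand]

lemma Qmat_one_zero (θ η δ : ℝ) : Qmat θ η δ 1 0 = Qmat θ η δ 0 1 := by
  simp [Qmat, Qmat_integrand]

lemma Qmat_one_one (θ η δ : ℝ) :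
    Qmat θ η δ 1 1 = η ^ 2 * ∫ s in (0:ℝ)..δ, rexp (-(θ * s)) ^ 2 := by
  simp [Qmat, Qmat_integrand]

lemma Pmat_zero_zero (θ η δ : ℝ) :
    Pmat θ η δ 0 0 = Qmat θ η δ 0 0 - Qmat θ η δ 0 1 ^ 2 / Qmat θ η δ 1 1 := by
  have hgain : H1row * Qmat θ η δ * H1rowᵀ = !![Qmat θ η δ 1 1] := by
    ext i j
    fin_cases i; fin_cases j
    simp [H1row, Matrix.mul_apply, Matrix.vecMul, dotProduct]
  rw [Pmat, Kgain, hgain]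
  simp [Matrix.mul_apply, H1row, Qmat_one_zero, sub_eq_add_neg, sq, div_eq_mul_inv, mul_right_comm]

lemma integral_decayIntegral_mul_exp (θ δ : ℝ) :
    ∫ s in (0:ℝ)..δ, decayIntegral θ s * rexp (-(θ * s)) = decayIntegral θ δ ^ 2 / 2 := by
  rw [intervalIntegral.integral_eq_sub_of_hasDerivAt (f := fun s => decayIntegral θ s ^ 2 / 2)
    (fun s _ => ((hasDerivAt_decayIntegral θ s).fun_pow 2).div_const 2 |>.congr_deriv (by ring))
    ((by have := continuous_decayIntegral θ; fun_prop : Continuous _).intervalIntegrable _ _)]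
  simp [decayIntegral]

lemma integral_exp_neg_mul_sq (θ δ : ℝ) :
    ∫ s in (0:ℝ)..δ, rexp (-(θ * s)) ^ 2 =
      decayIntegral θ δ * (1 + rexp (-(θ * δ))) / 2 := by
  have hderiv (s : ℝ) : HasDerivAt (fun s => decayIntegral θ s * (1 + rexp (-(θ * s))) / 2)
      (rexp (-(θ * s)) ^ 2) s := by
    refine (((hasDerivAt_decayIntegral θ s).fun_mul
      ((hasDerivAt_exp_neg_mul θ s).const_add 1)).div_const 2).congr_deriv ?_
    linear_combination (-rexp (-(θ * s)) / 2) * mul_decayIntegral θ s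
  rw [intervalIntegral.integral_eq_sub_of_hasDerivAt (fun s _ => hderiv s)
    ((by fun_prop : Continuous _).intervalIntegrable _ _)]
  simp [decayIntegral]

/-- `tanh (θ s / 2) / θ`, read as `s / 2` at `θ = 0`. -/
def scaledTanh (θ s : ℝ) : ℝ := decayIntegral θ s / (1 + rexp (-(θ * s)))

def posteriorVar (θ δ : ℝ) : ℝ :=
  (∫ s in (0:ℝ)..δ, decayIntegral θ s ^ 2) -
    decayIntegral θ δ ^ 3 / (2 * (1 + rexp (-(θ * δ))))

lemma Pmat_zero_zero_eq (θ η δ : ℝ) : Pmat θ η δ 0 0 = η ^ 2 * posteriorVar θ δ := by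
  rw [Pmat_zero_zero, Qmat_zero_zero, Qmat_zero_one, Qmat_one_one, posteriorVar,
    integral_decayIntegral_mul_exp, integral_exp_neg_mul_sq]
  rcases eq_or_ne η 0 with rfl | hη
  · simp
  rcases eq_or_ne (decayIntegral θ δ) 0 with hG | hG
  · simp [hG]
  have hpos : 0 < 1 + rexp (-(θ * δ)) := by positivity
  field_simp

lemma hasDerivAt_scaledTanh (θ s : ℝ) :
    HasDerivAt (scaledTanh θ) ((1 - θ ^ 2 * scaledTanh θ s ^ 2) / 2) s := by
  have hpos : 0 < 1 + rexp (-(θ * s)) := by positivity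
  refine ((hasDerivAt_decayIntegral θ s).fun_div ((hasDerivAt_exp_neg_mul θ s).const_add 1)
    hpos.ne').congr_deriv ?_
  rw [scaledTanh]
  field_simp
  linear_combination (θ * decayIntegral θ s + rexp (-(θ * s)) + 1) * mul_decayIntegral θ s

lemma hasDerivAt_posteriorVar (θ δ : ℝ) :
    HasDerivAt (posteriorVar θ) (scaledTanh θ δ ^ 2) δ := by
  have hpos : 0 < 1 + rexp (-(θ * δ)) := by positivity
  have hcont : Continuous fun s => decayIntegral θ s ^ 2 := (continuous_decayIntegral θ).pow 2
  refine ((hcont.integral_hasStrictDerivAt 0 δ).hasDerivAt.sub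
    (((hasDerivAt_decayIntegral θ δ).fun_pow 3).fun_div
      (((hasDerivAt_exp_neg_mul θ δ).const_add 1).const_mul 2) (by positivity))).congr_deriv ?_
  rw [scaledTanh]
  field_simp
  linear_combination (-decayIntegral θ δ ^ 2 * rexp (-(θ * δ))) * mul_decayIntegral θ δ

lemma le_of_hasDerivAt_le {f g f' g' : ℝ → ℝ} (hf : ∀ x, HasDerivAt f (f' x) x)
    (hg : ∀ x, HasDerivAt g (g' x) x) (h₀ : f 0 ≤ g 0)
    (hle : ∀ x, 0 ≤ x → f' x ≤ g' x)
    {x : ℝ} (hx : 0 ≤ x) : f x ≤ g x := by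
  have hmono : MonotoneOn (fun x => g x - f x) (Set.Ici 0) :=
    monotoneOn_of_hasDerivWithinAt_nonneg (convex_Ici 0)
      (fun y _ => ((hg y).sub (hf y)).continuousAt.continuousWithinAt)
      (fun y _ => ((hg y).sub (hf y)).hasDerivWithinAt)
      (fun y hy => sub_nonneg.2 (hle y (interior_subset hy)))
  have := hmono Set.self_mem_Ici hx hx
  linarith

lemma decayIntegral_nonneg (θ : ℝ) {s : ℝ} (hs : 0 ≤ s) : 0 ≤ decayIntegral θ s :=
  le_of_hasDerivAt_le (fun _ => hasDerivAt_const _ 0) (hasDerivAt_decayIntegral θ)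
    (by simp [decayIntegral]) (fun _ _ => (Real.exp_pos _).le) hs

lemma scaledTanh_nonneg (θ : ℝ) {s : ℝ} (hs : 0 ≤ s) : 0 ≤ scaledTanh θ s :=
  div_nonneg (decayIntegral_nonneg θ hs) (by positivity)

lemma scaledTanh_le (θ : ℝ) {s : ℝ} (hs : 0 ≤ s) : scaledTanh θ s ≤ s / 2 :=
  le_of_hasDerivAt_le (g := fun x => x / 2) (hasDerivAt_scaledTanh θ)
    (fun x => (hasDerivAt_id x).div_const 2)
    (by simp [scaledTanh, decayIntegral])
    (fun x _ => by nlinarith [sq_nonneg (θ * scaledTanh θ x)]) hs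

lemma sq_scaledTanh_le (θ : ℝ) {s : ℝ} (hs : 0 ≤ s) : scaledTanh θ s ^ 2 ≤ s ^ 2 / 4 := by
  have := scaledTanh_le θ hs
  nlinarith [scaledTanh_nonneg θ hs]

lemma le_scaledTanh (θ : ℝ) {s : ℝ} (hs : 0 ≤ s) :
    s / 2 - θ ^ 2 * s ^ 3 / 24 ≤ scaledTanh θ s := by
  refine le_of_hasDerivAt_le (f := fun x => x / 2 - θ ^ 2 * x ^ 3 / 24)
    (f' := fun x => 1 / 2 - θ ^ 2 * x ^ 2 / 8) (fun x => ?_) (hasDerivAt_scaledTanh θ)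
    (by simp [scaledTanh, decayIntegral]) (fun x hx => ?_) hs
  · exact (((hasDerivAt_id x).div_const 2).sub
      (((hasDerivAt_pow 3 x).const_mul (θ ^ 2)).div_const 24)).congr_deriv
      (by simp only [Nat.cast_ofNat, Nat.add_one_sub_one]; ring)
  · nlinarith [mul_le_mul_of_nonneg_left (sq_scaledTanh_le θ hx) (sq_nonneg θ)]

lemma le_sq_scaledTanh (θ : ℝ) {s : ℝ} (hs : 0 ≤ s) :
    s ^ 2 / 4 - θ ^ 2 * s ^ 4 / 24 ≤ scaledTanh θ s ^ 2 := by
  have h₀ := scaledTanh_nonneg θ hs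
  have h₁ := scaledTanh_le θ hs
  have h₂ := le_scaledTanh θ hs
  -- `(s/2)² - h² = (s/2 - h) (s/2 + h) ≤ (θ² s³/24) · s`
  nlinarith [mul_le_mul_of_nonneg_right h₂ (by linarith : 0 ≤ s / 2 + scaledTanh θ s)]

lemma abs_posteriorVar_sub_le (θ : ℝ) {δ : ℝ} (hδ : 0 ≤ δ) :
    |posteriorVar θ δ - δ ^ 3 / 12| ≤ θ ^ 2 * δ ^ 5 / 120 := by
  have hvar₀ : posteriorVar θ 0 = 0 := by simp [posteriorVar, decayIntegral]
  have hupper : posteriorVar θ δ ≤ δ ^ 3 / 12 :=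
    le_of_hasDerivAt_le (g' := fun x => x ^ 2 / 4) (hasDerivAt_posteriorVar θ)
      (fun x => ((hasDerivAt_pow 3 x).div_const 12).congr_deriv
        (by simp only [Nat.cast_ofNat, Nat.add_one_sub_one]; ring))
      (by simp [hvar₀]) (fun x hx => (sq_scaledTanh_le θ hx).trans_eq (by ring)) hδ
  have hlower : δ ^ 3 / 12 - θ ^ 2 * δ ^ 5 / 120 ≤ posteriorVar θ δ :=
    le_of_hasDerivAt_le (f := fun x => x ^ 3 / 12 - θ ^ 2 * x ^ 5 / 120)
      (f' := fun x => x ^ 2 / 4 - θ ^ 2 * x ^ 4 / 24)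
      (fun x => (((hasDerivAt_pow 3 x).div_const 12).sub
        (((hasDerivAt_pow 5 x).const_mul (θ ^ 2)).div_const 120)).congr_deriv
          (by simp only [Nat.cast_ofNat, Nat.add_one_sub_one]; ring))
      (hasDerivAt_posteriorVar θ) (by simp [hvar₀])
      (fun x hx => (le_sq_scaledTanh θ hx).trans_eq' (by ring)) hδ
  rw [abs_le]
  constructor <;> nlinarith [sq_nonneg θ, pow_nonneg hδ 5]

theorem ekf0_posterior_variance_general (θ η : ℝ) :
    ∃ C : ℝ, 0 < C ∧ ∀ δ : ℝ, 0 < δ → δ ≤ 1 →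
      |Pmat θ η δ 0 0 - η ^ 2 * δ ^ 3 / 12| ≤ C * δ ^ 5 := by
  refine ⟨η ^ 2 * θ ^ 2 / 120 + 1, by positivity, fun δ hδ _ => ?_⟩
  calc |Pmat θ η δ 0 0 - η ^ 2 * δ ^ 3 / 12|
        = η ^ 2 * |posteriorVar θ δ - δ ^ 3 / 12| := by
          rw [Pmat_zero_zero_eq, mul_div_assoc, ← mul_sub, abs_mul, abs_sq]
    _ ≤ η ^ 2 * (θ ^ 2 * δ ^ 5 / 120) :=
          mul_le_mul_of_nonneg_left (abs_posteriorVar_sub_le θ hδ.le) (sq_nonneg η)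
    _ ≤ (η ^ 2 * θ ^ 2 / 120 + 1) * δ ^ 5 := by nlinarith [pow_pos hδ 5]

/-- The one-step EKF0 posterior variance of the solution component is
`P(δ)₀,₀ = η²·δ³/12 + O(δ⁵)`, with a constant depending only on `θ` and `η`. -/
theorem ekf0_posterior_variance (θ η : ℝ) (hθ : 0 ≤ θ) (hη : 0 < η) :
    ∃ C : ℝ, 0 < C ∧ ∀ δ : ℝ, 0 < δ → δ ≤ 1 →
      |Pmat θ η δ 0 0 - η ^ 2 * δ ^ 3 / 12| ≤ C * δ ^ 5 :=
  ekf0_posterior_variance_general θ η
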